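/- arXiv:1509.00003 — 2 statements merged into one kernel-verified Lean document; each statement's English description precedes it below -/
import Mathlib

section
/- Let H ∈ (1/2,1), κ = H - 1/2, and for f ∈ L²([0,τ]) define h = K̂_τ f := I¹_{0+}[x^κ I^κ_{0+}(x^{-κ} f)] (composition of fractional integrals). Then h ∈ W^{1,2}([0,τ]) and ‖h‖_{W^{1,2}([0,τ])} ≤ c_H τ^{H-1/2} ‖f‖_{L²([0,τ])}. -/
open MeasureTheory

/-!
Write `κ = H - 1/2`. Cauchy–Schwarz against the weight `(s - u)^{κ-1}` gives
`|∫₀ˢ (s-u)^{κ-1} u^{-κ} f(u) du|² ≤ (∫₀ˢ (s-u)^{κ-1} u^{-2κ} du) (∫₀ˢ (s-u)^{κ-1} f(u)² du)`,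
whose first factor is the Beta integral `B(1-2κ, κ) s^{-κ}`; against the prefactor `s^{2κ}` this
leaves `s^κ ≤ τ^κ`. Integrating the second factor over `s ∈ (0, τ]` and exchanging the order of
integration bounds it by `(∫₀^τ t^{κ-1} dt) ‖f‖² = B(κ, 1) τ^κ ‖f‖²`.
-/

open Set ProbabilityTheory
open scoped ENNReal

lemma ENNReal.lintegral_mul_sq_le {α : Type*} [MeasurableSpace α] {μ : Measure α}
    {f g : α → ℝ≥0∞} (hf : AEMeasurable f μ) (hg : AEMeasurable g μ) :
    (∫⁻ a, f a * g a ∂μ) ^ 2 ≤ (∫⁻ a, f a ^ 2 ∂μ) * ∫⁻ a, g a ^ 2 ∂μ := by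
  have h := ENNReal.lintegral_mul_le_Lp_mul_Lq μ Real.HolderConjugate.two_two hf hg
  have hsqrt_sq : ∀ x : ℝ≥0∞, (x ^ (1 / 2 : ℝ)) ^ 2 = x := fun x => by
    rw [← ENNReal.rpow_natCast, ← ENNReal.rpow_mul]; norm_num
  simp only [ENNReal.rpow_two, Pi.mul_apply] at h
  calc (∫⁻ a, f a * g a ∂μ) ^ 2
      ≤ ((∫⁻ a, f a ^ 2 ∂μ) ^ (1 / 2 : ℝ) * (∫⁻ a, g a ^ 2 ∂μ) ^ (1 / 2 : ℝ)) ^ 2 := by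
        gcongr
    _ = (∫⁻ a, f a ^ 2 ∂μ) * ∫⁻ a, g a ^ 2 ∂μ := by rw [mul_pow, hsqrt_sq, hsqrt_sq]

lemma ENNReal.lintegral_weighted_mul_sq_le {α : Type*} [MeasurableSpace α] {μ : Measure α}
    {w f g : α → ℝ≥0∞} (hw : AEMeasurable w μ) (hf : AEMeasurable f μ)
    (hg : AEMeasurable g μ) :
    (∫⁻ a, w a * (f a * g a) ∂μ) ^ 2 ≤
      (∫⁻ a, w a * f a ^ 2 ∂μ) * ∫⁻ a, w a * g a ^ 2 ∂μ := by
  have hμ := withDensity_absolutelyContinuous μ w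
  have h := ENNReal.lintegral_mul_sq_le (hf.mono' hμ) (hg.mono' hμ)
  rwa [lintegral_withDensity_eq_lintegral_mul₀ hw (g := fun a => f a * g a) (hf.mul hg),
    lintegral_withDensity_eq_lintegral_mul₀ hw (g := fun a => f a ^ 2) (hf.pow_const 2),
    lintegral_withDensity_eq_lintegral_mul₀ hw (g := fun a => g a ^ 2) (hg.pow_const 2)] at h

lemma lintegral_Ioc_lintegral_Ioc_sub_mul_le {k F : ℝ → ℝ≥0∞} (hk : Measurable k)
    (hF : Measurable F) (τ : ℝ) :
    ∫⁻ s in Ioc 0 τ, ∫⁻ u in Ioc 0 s, k (s - u) * F u ≤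
      (∫⁻ t in Icc 0 τ, k t) * ∫⁻ u in Ioc 0 τ, F u := by
  set kτ := (Icc 0 τ).indicator k
  set Fτ := (Ioc 0 τ).indicator F
  have hkτ : Measurable kτ := hk.indicator measurableSet_Icc
  have hinner : ∀ s ∈ Ioc 0 τ,
      ∫⁻ u in Ioc 0 s, k (s - u) * F u ≤ ∫⁻ u, Fτ u * kτ (s - u) := by
    intro s hs
    rw [← lintegral_indicator measurableSet_Ioc]
    refine lintegral_mono fun u => ?_
    by_cases hu : u ∈ Ioc 0 s
    · have huτ : u ∈ Ioc 0 τ := ⟨hu.1, hu.2.trans hs.2⟩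
      have hsu : s - u ∈ Icc 0 τ := ⟨sub_nonneg.2 hu.2, by linarith [hu.1, hs.2]⟩
      rw [indicator_of_mem hu, show Fτ u = F u from indicator_of_mem huτ F,
        show kτ (s - u) = k (s - u) from indicator_of_mem hsu k, mul_comm]
    · simp [indicator_of_notMem hu]
  have hmeas : Measurable fun p : ℝ × ℝ => Fτ p.2 * kτ (p.1 - p.2) :=
    ((hF.indicator measurableSet_Ioc).comp measurable_snd).mul
      (hkτ.comp (measurable_fst.sub measurable_snd))
  calc ∫⁻ s in Ioc 0 τ, ∫⁻ u in Ioc 0 s, k (s - u) * F u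
      ≤ ∫⁻ s in Ioc 0 τ, ∫⁻ u, Fτ u * kτ (s - u) :=
        setLIntegral_mono' measurableSet_Ioc hinner
    _ ≤ ∫⁻ s, ∫⁻ u, Fτ u * kτ (s - u) := setLIntegral_le_lintegral _ _
    _ = ∫⁻ u, ∫⁻ s, Fτ u * kτ (s - u) := lintegral_lintegral_swap hmeas.aemeasurable
    _ = ∫⁻ u, Fτ u * ∫⁻ t, kτ t := by
        refine lintegral_congr fun u => ?_
        rw [lintegral_const_mul _ (f := fun s => kτ (s - u)) (hkτ.comp (measurable_sub_const u)),
          lintegral_sub_right_eq_self]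
    _ = (∫⁻ t in Icc 0 τ, k t) * ∫⁻ u in Ioc 0 τ, F u := by
        rw [lintegral_mul_const _ (hF.indicator measurableSet_Ioc), mul_comm,
          lintegral_indicator measurableSet_Icc, lintegral_indicator measurableSet_Ioc]

lemma integrable_sq_and_integral_sq_le_of_lintegral_le {α : Type*} [MeasurableSpace α]
    {μ : Measure α} {g f : α → ℝ} (hg : AEStronglyMeasurable g μ) (hf : MemLp f 2 μ)
    {C : ℝ} (hC : 0 ≤ C)
    (h : ∫⁻ a, ‖g a‖ₑ ^ 2 ∂μ ≤ ENNReal.ofReal C * ∫⁻ a, ‖f a‖ₑ ^ 2 ∂μ) :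
    Integrable (fun a => g a ^ 2) μ ∧ ∫ a, g a ^ 2 ∂μ ≤ C * ∫ a, f a ^ 2 ∂μ := by
  have hsq : ∀ x : ℝ, ‖x‖ₑ ^ 2 = ENNReal.ofReal (x ^ 2) := fun x => by
    rw [Real.enorm_eq_ofReal_abs, ← ENNReal.ofReal_pow (abs_nonneg x), sq_abs]
  have hsq_nonneg : ∀ φ : α → ℝ, 0 ≤ᵐ[μ] fun a => φ a ^ 2 := fun φ =>
    Filter.Eventually.of_forall fun a => sq_nonneg (φ a)
  have hf2 : ∫⁻ a, ‖f a‖ₑ ^ 2 ∂μ = ENNReal.ofReal (∫ a, f a ^ 2 ∂μ) := by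
    simp_rw [hsq]
    exact (ofReal_integral_eq_lintegral_ofReal hf.integrable_sq (hsq_nonneg f)).symm
  rw [hf2, ← ENNReal.ofReal_mul hC] at h
  simp_rw [hsq] at h
  have hg2 : AEStronglyMeasurable (fun a => g a ^ 2) μ := hg.pow 2
  refine ⟨⟨hg2, ?_⟩, ?_⟩
  · rw [hasFiniteIntegral_iff_ofReal (hsq_nonneg g)]
    exact h.trans_lt ENNReal.ofReal_lt_top
  · rw [integral_eq_lintegral_of_nonneg_ae (hsq_nonneg g) hg2]
    exact ENNReal.toReal_le_of_le_ofReal (by positivity) h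

lemma lintegral_Ioo_rpow_mul_one_sub_rpow {α β : ℝ} (hα : 0 < α) (hβ : 0 < β) :
    ∫⁻ x in Ioo 0 1, ENNReal.ofReal (x ^ (α - 1) * (1 - x) ^ (β - 1)) =
      ENNReal.ofReal (beta α β) := by
  have hB := beta_pos hα hβ
  have h := lintegral_betaPDF_eq_one hα hβ
  simp_rw [lintegral_betaPDF, mul_assoc, ENNReal.ofReal_mul (one_div_pos.2 hB).le,
    lintegral_const_mul' _ _ ENNReal.ofReal_ne_top, one_div, ENNReal.ofReal_inv_of_pos hB,
    mul_comm _ (∫⁻ _ in _, _)] at h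
  rw [ENNReal.eq_inv_of_mul_eq_one_left h, inv_inv]

lemma lintegral_Ioc_rpow_mul_sub_rpow {α β s : ℝ} (hα : 0 < α) (hβ : 0 < β) (hs : 0 < s) :
    ∫⁻ u in Ioc 0 s, ENNReal.ofReal (u ^ (α - 1) * (s - u) ^ (β - 1)) =
      ENNReal.ofReal (s ^ (α + β - 1) * beta α β) := by
  have himage : (s * ·) '' Ioo 0 1 = Ioo 0 s := by simp [image_mul_left_Ioo hs]
  rw [← Measure.restrict_congr_set Ioo_ae_eq_Ioc, ← himage,
    lintegral_image_eq_lintegral_abs_deriv_mul measurableSet_Ioo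
      (fun x _ => (hasDerivAt_const_mul s).hasDerivWithinAt) (mul_right_injective₀ hs.ne').injOn,
    ENNReal.ofReal_mul (by positivity), ← lintegral_Ioo_rpow_mul_one_sub_rpow hα hβ,
    ← lintegral_const_mul' _ _ ENNReal.ofReal_ne_top]
  refine setLIntegral_congr_fun measurableSet_Ioo fun x hx => ?_
  have hscale : s ^ (α + β - 1) = s ^ (α - 1) * s ^ (β - 1) * s := by
    rw [← Real.rpow_add hs, ← Real.rpow_add_one hs.ne']; ring_nf
  rw [abs_of_pos hs, ← ENNReal.ofReal_mul hs.le, ← ENNReal.ofReal_mul (by positivity),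
    ← mul_one_sub, Real.mul_rpow hs.le hx.1.le, Real.mul_rpow hs.le (by linarith [hx.2]), hscale]
  ring_nf

lemma measurable_intervalIntegral_of_uncurry {K : ℝ → ℝ → ℝ}
    (hK : Measurable (Function.uncurry K)) (a : ℝ) :
    Measurable fun t => ∫ u in a..t, K t u := by
  have hIoc : ∀ S : Set (ℝ × ℝ), MeasurableSet S →
      Measurable fun t => ∫ u, S.indicator (Function.uncurry K) (t, u) := fun S hS =>
    (hK.indicator hS).stronglyMeasurable.integral_prod_right'.measurable
  have hright : Measurable fun t => ∫ u in Ioc a t, K t u := by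
    simp_rw [← integral_indicator measurableSet_Ioc]
    exact hIoc {p | a < p.2 ∧ p.2 ≤ p.1}
      ((measurableSet_lt measurable_const measurable_snd).inter
        (measurableSet_le measurable_snd measurable_fst))
  have hleft : Measurable fun t => ∫ u in Ioc t a, K t u := by
    simp_rw [← integral_indicator measurableSet_Ioc]
    exact hIoc {p | p.1 < p.2 ∧ p.2 ≤ a}
      ((measurableSet_lt measurable_fst measurable_snd).inter
        (measurableSet_le measurable_snd measurable_const))
  exact hright.sub hleft

noncomputable def riemannLiouville (α : ℝ) (g : ℝ → ℝ) (t : ℝ) : ℝ :=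
  (Real.Gamma α)⁻¹ * ∫ u in (0:ℝ)..t, (t - u) ^ (α - 1) * g u

lemma measurable_riemannLiouville {g : ℝ → ℝ} (hg : Measurable g) (α : ℝ) :
    Measurable (riemannLiouville α g) :=
  measurable_const.mul <| measurable_intervalIntegral_of_uncurry
    (K := fun t u => (t - u) ^ (α - 1) * g u)
    (((measurable_fst.sub measurable_snd).pow_const _).mul (hg.comp measurable_snd)) 0

lemma riemannLiouville_congr_ae {g g' : ℝ → ℝ} {τ t : ℝ}
    (h : g =ᵐ[volume.restrict (Ioc 0 τ)] g') (ht : t ∈ Icc 0 τ) (α : ℝ) :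
    riemannLiouville α g t = riemannLiouville α g' t := by
  unfold riemannLiouville
  congr 1
  refine intervalIntegral.integral_congr_ae ?_
  filter_upwards [(ae_restrict_iff' measurableSet_Ioc).1 h] with u hu hu'
  rw [uIoc_of_le ht.1] at hu'
  rw [hu ⟨hu'.1, hu'.2.trans ht.2⟩]

lemma enorm_intervalIntegral_sub_rpow_mul_sq_le {κ s : ℝ} (hκ : 0 < κ) (hκ' : κ < 1 / 2)
    (hs : 0 < s) {f : ℝ → ℝ} (hf : AEMeasurable f (volume.restrict (Ioc 0 s))) :
    ‖∫ u in (0:ℝ)..s, (s - u) ^ (κ - 1) * (u ^ (-κ) * f u)‖ₑ ^ 2 ≤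
      ENNReal.ofReal (s ^ (-κ) * beta (1 - 2 * κ) κ) *
        ∫⁻ u in Ioc 0 s, ENNReal.ofReal ((s - u) ^ (κ - 1)) * ‖f u‖ₑ ^ 2 := by
  have hkernel : ∫⁻ u in Ioc 0 s,
      ENNReal.ofReal ((s - u) ^ (κ - 1)) * ENNReal.ofReal (u ^ (-κ)) ^ 2 =
        ENNReal.ofReal (s ^ (-κ) * beta (1 - 2 * κ) κ) := by
    have h := lintegral_Ioc_rpow_mul_sub_rpow (α := 1 - 2 * κ) (by linarith) hκ hs
    rw [show 1 - 2 * κ + κ - 1 = -κ by ring] at h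
    rw [← h]
    refine setLIntegral_congr_fun measurableSet_Ioc fun u hu => ?_
    rw [← ENNReal.ofReal_pow (Real.rpow_nonneg hu.1.le _),
      ← ENNReal.ofReal_mul (Real.rpow_nonneg (sub_nonneg.2 hu.2) _), ← Real.rpow_natCast,
      ← Real.rpow_mul hu.1.le, mul_comm]
    push_cast; ring_nf
  calc ‖∫ u in (0:ℝ)..s, (s - u) ^ (κ - 1) * (u ^ (-κ) * f u)‖ₑ ^ 2
      ≤ (∫⁻ u in Ioc 0 s, ENNReal.ofReal ((s - u) ^ (κ - 1)) *
          (ENNReal.ofReal (u ^ (-κ)) * ‖f u‖ₑ)) ^ 2 := by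
        rw [intervalIntegral.integral_of_le hs.le]
        gcongr
        refine (enorm_integral_le_lintegral_enorm _).trans_eq ?_
        refine setLIntegral_congr_fun measurableSet_Ioc fun u hu => ?_
        rw [enorm_mul, enorm_mul, Real.enorm_of_nonneg (Real.rpow_nonneg (sub_nonneg.2 hu.2) _),
          Real.enorm_of_nonneg (Real.rpow_nonneg hu.1.le _)]
    _ ≤ _ := by
        refine (ENNReal.lintegral_weighted_mul_sq_le (by fun_prop) (by fun_prop) hf.enorm).trans ?_
        rw [hkernel]

lemma enorm_rpow_mul_riemannLiouville_sq_le {κ s : ℝ} (hκ : 0 < κ) (hκ' : κ < 1 / 2)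
    (hs : 0 < s) {f : ℝ → ℝ} (hf : AEMeasurable f (volume.restrict (Ioc 0 s))) :
    ‖s ^ κ * riemannLiouville κ (fun u => u ^ (-κ) * f u) s‖ₑ ^ 2 ≤
      ENNReal.ofReal ((Real.Gamma κ)⁻¹ ^ 2 * beta (1 - 2 * κ) κ * s ^ κ) *
        ∫⁻ u in Ioc 0 s, ENNReal.ofReal ((s - u) ^ (κ - 1)) * ‖f u‖ₑ ^ 2 := by
  have hΓ : 0 ≤ (Real.Gamma κ)⁻¹ := inv_nonneg.2 (Real.Gamma_pos_of_pos hκ).le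
  have hconst : (Real.Gamma κ)⁻¹ ^ 2 * beta (1 - 2 * κ) κ * s ^ κ =
      (s ^ κ) ^ 2 * (Real.Gamma κ)⁻¹ ^ 2 * (s ^ (-κ) * beta (1 - 2 * κ) κ) := by
    rw [Real.rpow_neg hs.le]
    field_simp
  rw [riemannLiouville, enorm_mul, enorm_mul, mul_pow, mul_pow,
    Real.enorm_of_nonneg (Real.rpow_nonneg hs.le κ), Real.enorm_of_nonneg hΓ, hconst,
    ENNReal.ofReal_mul (by positivity), ENNReal.ofReal_mul (by positivity),
    ENNReal.ofReal_pow (by positivity), ENNReal.ofReal_pow hΓ, mul_assoc, mul_assoc]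
  gcongr
  exact enorm_intervalIntegral_sub_rpow_mul_sq_le hκ hκ' hs hf

lemma lintegral_enorm_rpow_mul_riemannLiouville_sq_le {κ τ : ℝ} (hκ : 0 < κ)
    (hκ' : κ < 1 / 2) (hτ : 0 < τ) {f : ℝ → ℝ} (hf : Measurable f) :
    ∫⁻ s in Ioc 0 τ, ‖s ^ κ * riemannLiouville κ (fun u => u ^ (-κ) * f u) s‖ₑ ^ 2 ≤
      ENNReal.ofReal ((Real.Gamma κ)⁻¹ ^ 2 * beta (1 - 2 * κ) κ * beta κ 1 * (τ ^ κ) ^ 2) *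
        ∫⁻ u in Ioc 0 τ, ‖f u‖ₑ ^ 2 := by
  set A := (Real.Gamma κ)⁻¹ ^ 2 * beta (1 - 2 * κ) κ
  have hA : 0 ≤ A := mul_nonneg (by positivity) (beta_pos (by linarith) hκ).le
  have htail : ∫⁻ t in Icc 0 τ, ENNReal.ofReal (t ^ (κ - 1)) =
      ENNReal.ofReal (τ ^ κ * beta κ 1) := by
    rw [← Measure.restrict_congr_set Ioc_ae_eq_Icc]
    simpa using lintegral_Ioc_rpow_mul_sub_rpow hκ one_pos hτ
  calc ∫⁻ s in Ioc 0 τ, ‖s ^ κ * riemannLiouville κ (fun u => u ^ (-κ) * f u) s‖ₑ ^ 2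
      ≤ ∫⁻ s in Ioc 0 τ, ENNReal.ofReal (A * τ ^ κ) *
          ∫⁻ u in Ioc 0 s, ENNReal.ofReal ((s - u) ^ (κ - 1)) * ‖f u‖ₑ ^ 2 := by
        refine setLIntegral_mono' measurableSet_Ioc fun s hs => ?_
        refine (enorm_rpow_mul_riemannLiouville_sq_le hκ hκ' hs.1 hf.aemeasurable).trans ?_
        gcongr
        exacts [hs.1.le, hs.2]
    _ ≤ ENNReal.ofReal (A * τ ^ κ) * (ENNReal.ofReal (τ ^ κ * beta κ 1) *
          ∫⁻ u in Ioc 0 τ, ‖f u‖ₑ ^ 2) := by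
        rw [lintegral_const_mul' _ _ ENNReal.ofReal_ne_top, ← htail]
        gcongr
        exact lintegral_Ioc_lintegral_Ioc_sub_mul_le (by fun_prop) (by fun_prop) τ
    _ = _ := by
        rw [← mul_assoc, ← ENNReal.ofReal_mul (by positivity)]
        ring_nf

theorem stmt9 (H : ℝ) (hH : 1/2 < H) (hH1 : H < 1) :
    ∃ c > 0, ∀ τ : ℝ, 0 < τ → ∀ f : ℝ → ℝ,
      MemLp f 2 (volume.restrict (Set.Ioc (0:ℝ) τ)) →
      IntegrableOn
        (fun s : ℝ => (s ^ (H - 1/2) *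
          ((Real.Gamma (H - 1/2))⁻¹ *
            ∫ u in (0:ℝ)..s, (s - u) ^ (H - 1/2 - 1) * (u ^ (-(H - 1/2)) * f u))) ^ 2)
        (Set.Ioc (0:ℝ) τ) ∧
      (∫ s in Set.Ioc (0:ℝ) τ, (s ^ (H - 1/2) *
          ((Real.Gamma (H - 1/2))⁻¹ *
            ∫ u in (0:ℝ)..s, (s - u) ^ (H - 1/2 - 1) * (u ^ (-(H - 1/2)) * f u))) ^ 2)
        ≤ (c * τ ^ (H - 1/2)) ^ 2 * ∫ s in Set.Ioc (0:ℝ) τ, (f s) ^ 2 := by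
  have hκ : 0 < H - 1/2 := by linarith
  have hκ' : H - 1/2 < 1 / 2 := by linarith
  set κ := H - 1/2
  set C := (Real.Gamma κ)⁻¹ ^ 2 * beta (1 - 2 * κ) κ * beta κ 1
  have hC : 0 < C := mul_pos (mul_pos (by have := Real.Gamma_pos_of_pos hκ; positivity)
    (beta_pos (by linarith) hκ)) (beta_pos hκ one_pos)
  refine ⟨√C, Real.sqrt_pos.2 hC, fun τ hτ f hf => ?_⟩
  obtain ⟨f', hf'm, hff'⟩ := hf.1.aemeasurable
  let hdot (g : ℝ → ℝ) (s : ℝ) := s ^ κ * riemannLiouville κ (fun u => u ^ (-κ) * g u) s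
  have hweighted : (fun u => u ^ (-κ) * f u) =ᵐ[volume.restrict (Ioc 0 τ)]
      fun u => u ^ (-κ) * f' u :=
    hff'.mono fun u hu => congrArg (u ^ (-κ) * ·) hu
  have hdot_eq : EqOn (fun s => hdot f s ^ 2) (fun s => hdot f' s ^ 2) (Ioc 0 τ) :=
    fun s hs => by
      dsimp only [hdot]
      rw [riemannLiouville_congr_ae hweighted (Ioc_subset_Icc_self hs)]
  have hsq_eq : (fun u => f u ^ 2) =ᵐ[volume.restrict (Ioc 0 τ)] fun u => f' u ^ 2 :=
    hff'.fun_comp (· ^ 2)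
  change IntegrableOn (fun s => hdot f s ^ 2) (Ioc 0 τ) ∧
    ∫ s in Ioc 0 τ, hdot f s ^ 2 ≤ (√C * τ ^ κ) ^ 2 * ∫ s in Ioc 0 τ, f s ^ 2
  rw [integrableOn_congr_fun hdot_eq measurableSet_Ioc,
    setIntegral_congr_fun measurableSet_Ioc hdot_eq, integral_congr_ae hsq_eq, mul_pow,
    Real.sq_sqrt hC.le]
  have hdot_meas : Measurable (hdot f') := (measurable_id.pow_const κ).mul
    (measurable_riemannLiouville ((measurable_id.pow_const _).mul hf'm) κ)
  exact integrable_sq_and_integral_sq_le_of_lintegral_le hdot_meas.aestronglyMeasurable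
    (hf.ae_eq hff') (by positivity)
    (lintegral_enorm_rpow_mul_riemannLiouville_sq_le hκ hκ' hτ hf'm)
end

section
/- Let b : ℝ^d → ℝ^d be C¹ with uniformly bounded derivative, and suppose the path Y : [0,∞) → ℝ^d satisfies, for some ε ∈ (0, 1/2) and random constant Z: |Y_s - Y_{s-r}| ≤ Z (1+s)^{2ε} r^{H-ε} for all 0 < r ≤ s (with Y extended by Y_t = y₀ for t ≤ 0). Then for every s > 0 the fractional derivative [D_+^{H-1/2} b(Y)]_s = c_H ∫₀^∞ (b(Y_s) - b(Y_{s-r})) r^{-(H+1/2)} dr satisfies |[D_+^{H-1/2} b(Y)]_s| ≤ C (s^{1/2-ε} Z (1+s)^{2ε} + |Y_s - y₀| s^{1/2 - H}). -/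
/-!
Split the integral at `r = s`. For `r ≤ s` the Lipschitz bound on `b` and the Hölder bound on `Y`
dominate the integrand by `Z (1 + s)^{2ε} r^{-(1/2 + ε)}`, which is integrable at `0` because
`ε < 1/2`. For `r > s` the path is frozen at `y₀`, so the integrand is
`r^{-(H + 1/2)} • (b (Y s) - b y₀)`, integrable at infinity because `H > 1/2`.
-/

open MeasureTheory Set

section RpowKernel

theorem integrableOn_Ioc_zero_rpow {a s : ℝ} (ha : -1 < a) (hs : 0 ≤ s) :
    IntegrableOn (fun r : ℝ => r ^ a) (Ioc 0 s) :=
  (intervalIntegrable_iff_integrableOn_Ioc_of_le hs).1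
    (intervalIntegral.intervalIntegrable_rpow' ha)

variable {E : Type*} [NormedAddCommGroup E]

theorem integrableOn_Ioc_of_norm_le_rpow {g : ℝ → E} {K a s : ℝ} (ha : -1 < a) (hs : 0 ≤ s)
    (hg : AEStronglyMeasurable g (volume.restrict (Ioc 0 s)))
    (hbound : ∀ r ∈ Ioc 0 s, ‖g r‖ ≤ K * r ^ a) :
    IntegrableOn g (Ioc 0 s) :=
  ((integrableOn_Ioc_zero_rpow ha hs).const_mul K).mono' hg
    ((ae_restrict_iff' measurableSet_Ioc).2 (.of_forall hbound))

theorem norm_setIntegral_Ioc_le_of_norm_le_rpow [NormedSpace ℝ E] {g : ℝ → E} {K a s : ℝ}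
    (ha : -1 < a) (hs : 0 ≤ s) (hbound : ∀ r ∈ Ioc 0 s, ‖g r‖ ≤ K * r ^ a) :
    ‖∫ r in Ioc 0 s, g r‖ ≤ K * (s ^ (a + 1) / (a + 1)) := by
  calc ‖∫ r in Ioc 0 s, g r‖ ≤ ∫ r in Ioc 0 s, K * r ^ a :=
        norm_integral_le_of_norm_le ((integrableOn_Ioc_zero_rpow ha hs).const_mul K)
          ((ae_restrict_iff' measurableSet_Ioc).2 (.of_forall hbound))
    _ = K * (s ^ (a + 1) / (a + 1)) := by
        rw [integral_const_mul, ← intervalIntegral.integral_of_le hs, integral_rpow (.inl ha),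
          Real.zero_rpow (by linarith), sub_zero]

theorem norm_setIntegral_Ioi_rpow_smul_const [NormedSpace ℝ E] [CompleteSpace E] {a s : ℝ}
    (ha : a < -1) (hs : 0 < s) (v : E) :
    ‖∫ r in Ioi s, r ^ a • v‖ = s ^ (a + 1) / -(a + 1) * ‖v‖ := by
  rw [integral_smul_const, integral_Ioi_rpow_of_lt ha hs, norm_smul, neg_div, ← div_neg,
    Real.norm_of_nonneg (div_nonneg (Real.rpow_nonneg hs.le _) (by linarith))]

end RpowKernel

section FractionalDerivative

variable {E F : Type*} [NormedAddCommGroup E] [NormedAddCommGroup F] [NormedSpace ℝ F]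
  [CompleteSpace F]

theorem integrableOn_rpow_smul_sub_and_norm_integral_le {H ε Z : ℝ} (hH : 1/2 < H)
    (hε : ε < 1/2) {y₀ : E} {Y : ℝ → E} (hYc : Continuous Y) (hY0 : ∀ t ≤ 0, Y t = y₀)
    (hHol : ∀ r s : ℝ, 0 < r → r ≤ s →
      ‖Y s - Y (s - r)‖ ≤ Z * (1 + s) ^ (2*ε) * r ^ (H - ε))
    {K : NNReal} {b : E → F} (hb : LipschitzWith K b) {s : ℝ} (hs : 0 < s) :
    IntegrableOn (fun r : ℝ => r ^ (-(H + 1/2)) • (b (Y s) - b (Y (s - r)))) (Ioi 0) ∧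
      ‖∫ r in Ioi (0:ℝ), r ^ (-(H + 1/2)) • (b (Y s) - b (Y (s - r)))‖
        ≤ K * Z * (1 + s) ^ (2*ε) * (s ^ ((1:ℝ)/2 - ε) / (1/2 - ε))
          + s ^ ((1:ℝ)/2 - H) / (H - 1/2) * (K * ‖Y s - y₀‖) := by
  set f := fun r : ℝ => r ^ (-(H + 1/2)) • (b (Y s) - b (Y (s - r)))
  have hnear : ∀ r ∈ Ioc 0 s,
      ‖f r‖ ≤ K * Z * (1 + s) ^ (2*ε) * r ^ (-(1/2 + ε) : ℝ) := by
    rintro r ⟨hr, hrs⟩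
    calc ‖f r‖ = r ^ (-(H + 1/2)) * ‖b (Y s) - b (Y (s - r))‖ := by
          rw [norm_smul, Real.norm_of_nonneg (Real.rpow_nonneg hr.le _)]
      _ ≤ r ^ (-(H + 1/2)) * (K * (Z * (1 + s) ^ (2*ε) * r ^ (H - ε))) := by
          gcongr
          exact (hb.norm_sub_le _ _).trans (by gcongr; exact hHol r s hr hrs)
      _ = K * Z * (1 + s) ^ (2*ε) * r ^ (-(1/2 + ε) : ℝ) := by
          have hexp : r ^ (-(H + 1/2)) * r ^ (H - ε) = r ^ (-(1/2 + ε) : ℝ) := by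
            rw [← Real.rpow_add hr]; ring_nf
          linear_combination K * Z * (1 + s) ^ (2*ε) * hexp
  have hfar : EqOn f (fun r : ℝ => r ^ (-(H + 1/2)) • (b (Y s) - b y₀)) (Ioi s) := by
    intro r hr
    simp only [f, hY0 (s - r) (by linarith [mem_Ioi.1 hr])]
  have hcont : ContinuousOn f (Ioi 0) := by
    have hbc := hb.continuous
    exact .smul (fun r hr => (Real.continuousAt_rpow_const r _ (.inl hr.ne')).continuousWithinAt)
      (by fun_prop : Continuous fun r => b (Y s) - b (Y (s - r))).continuousOn
  have hint_near : IntegrableOn f (Ioc 0 s) :=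
    integrableOn_Ioc_of_norm_le_rpow (by linarith) hs.le
      ((hcont.mono Ioc_subset_Ioi_self).aestronglyMeasurable measurableSet_Ioc) hnear
  have hint_far : IntegrableOn f (Ioi s) :=
    IntegrableOn.congr_fun ((integrableOn_Ioi_rpow_of_lt (by linarith) hs).smul_const _)
      (fun r hr => (hfar hr).symm) measurableSet_Ioi
  have hsplit : Ioc 0 s ∪ Ioi s = Ioi 0 := Ioc_union_Ioi_eq_Ioi hs.le
  refine ⟨hsplit ▸ hint_near.union hint_far, ?_⟩
  rw [← hsplit, setIntegral_union (Ioc_disjoint_Ioi le_rfl) measurableSet_Ioi hint_near hint_far]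
  refine (norm_add_le _ _).trans (add_le_add ?_ ?_)
  · simpa only [show -(1/2 + ε) + 1 = (1:ℝ)/2 - ε by ring]
      using norm_setIntegral_Ioc_le_of_norm_le_rpow (by linarith) hs.le hnear
  · rw [setIntegral_congr_fun measurableSet_Ioi hfar, norm_setIntegral_Ioi_rpow_smul_const
      (by linarith) hs, show -(H + 1/2) + 1 = (1:ℝ)/2 - H by ring, neg_sub]
    exact mul_le_mul_of_nonneg_left (hb.norm_sub_le _ _)
      (div_nonneg (Real.rpow_nonneg hs.le _) (by linarith))

end FractionalDerivative

theorem stmt15_general {d : ℕ} (H ε M : ℝ) (hH : 1/2 < H)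
    (hε2 : ε < 1/2) (hM : 0 ≤ M)
    (Z : ℝ) (hZ : 0 ≤ Z) (y₀ : EuclideanSpace ℝ (Fin d))
    (Y : ℝ → EuclideanSpace ℝ (Fin d)) (hYc : Continuous Y)
    (hY0 : ∀ t : ℝ, t ≤ 0 → Y t = y₀)
    (hHol : ∀ r s : ℝ, 0 < r → r ≤ s →
      ‖Y s - Y (s - r)‖ ≤ Z * (1 + s) ^ (2*ε) * r ^ (H - ε))
    (b : EuclideanSpace ℝ (Fin d) → EuclideanSpace ℝ (Fin d))
    (hb : ContDiff ℝ 1 b) (hb' : ∀ x, ‖fderiv ℝ b x‖ ≤ M) :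
    ∃ C > 0, ∀ s : ℝ, 0 < s →
      IntegrableOn (fun r : ℝ => r ^ (-(H + 1/2)) • (b (Y s) - b (Y (s - r))))
        (Set.Ioi 0) ∧
      ‖∫ r in Set.Ioi (0:ℝ), r ^ (-(H + 1/2)) • (b (Y s) - b (Y (s - r)))‖
        ≤ C * (s ^ ((1:ℝ)/2 - ε) * Z * (1 + s) ^ (2*ε) + ‖Y s - y₀‖ * s ^ ((1:ℝ)/2 - H)) := by
  lift M to NNReal using hM
  have hlip : LipschitzWith M b :=
    lipschitzWith_of_nnnorm_fderiv_le (hb.differentiable one_ne_zero) fun x => hb' x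
  have hc₁ : 0 ≤ M / (1/2 - ε) := div_nonneg M.2 (by linarith)
  have hc₂ : 0 ≤ M / (H - 1/2) := div_nonneg M.2 (by linarith)
  refine ⟨M / (1/2 - ε) + M / (H - 1/2) + 1, by positivity, fun s hs => ?_⟩
  obtain ⟨hint, hle⟩ :=
    integrableOn_rpow_smul_sub_and_norm_integral_le hH hε2 hYc hY0 hHol hlip hs
  have hA : 0 ≤ s ^ ((1:ℝ)/2 - ε) * Z * (1 + s) ^ (2*ε) := by positivity
  have hB : 0 ≤ ‖Y s - y₀‖ * s ^ ((1:ℝ)/2 - H) := by positivity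
  refine ⟨hint, hle.trans ?_⟩
  calc _ = M / (1/2 - ε) * (s ^ ((1:ℝ)/2 - ε) * Z * (1 + s) ^ (2*ε))
        + M / (H - 1/2) * (‖Y s - y₀‖ * s ^ ((1:ℝ)/2 - H)) := by ring
    _ ≤ _ := by nlinarith [mul_nonneg hc₁ hB, mul_nonneg hc₂ hA]

theorem stmt15 {d : ℕ} (H ε M : ℝ) (hH : 1/2 < H) (hH1 : H < 1)
    (hε : 0 < ε) (hε2 : ε < 1/2) (hM : 0 ≤ M)
    (Z : ℝ) (hZ : 0 ≤ Z) (y₀ : EuclideanSpace ℝ (Fin d))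
    (Y : ℝ → EuclideanSpace ℝ (Fin d)) (hYc : Continuous Y)
    (hY0 : ∀ t : ℝ, t ≤ 0 → Y t = y₀)
    (hHol : ∀ r s : ℝ, 0 < r → r ≤ s →
      ‖Y s - Y (s - r)‖ ≤ Z * (1 + s) ^ (2*ε) * r ^ (H - ε))
    (b : EuclideanSpace ℝ (Fin d) → EuclideanSpace ℝ (Fin d))
    (hb : ContDiff ℝ 1 b) (hb' : ∀ x, ‖fderiv ℝ b x‖ ≤ M) :
    ∃ C > 0, ∀ s : ℝ, 0 < s →
      IntegrableOn (fun r : ℝ => r ^ (-(H + 1/2)) • (b (Y s) - b (Y (s - r))))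
        (Set.Ioi 0) ∧
      ‖∫ r in Set.Ioi (0:ℝ), r ^ (-(H + 1/2)) • (b (Y s) - b (Y (s - r)))‖
        ≤ C * (s ^ ((1:ℝ)/2 - ε) * Z * (1 + s) ^ (2*ε) + ‖Y s - y₀‖ * s ^ ((1:ℝ)/2 - H)) :=
  stmt15_general H ε M hH hε2 hM Z hZ y₀ Y hYc hY0 hHol b hb hb'
end
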